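/- arXiv:2310.13938 — 5 statements merged into one kernel-verified Lean document; each statement's English description precedes it below -/
import Mathlib

section
/- Let 1 ≤ k_a ≤ k_b ≤ N be natural numbers and let ρ : ℕ → ℝ. Suppose α : ℕ → ℝ satisfies: α(k) = ρ(k_a) for all 1 ≤ k ≤ k_a; α(k+1) = min(α(k), ρ(k+1)) for all k_a ≤ k < k_b; and α(k) = α(k_b) for all k_b < k ≤ N. Then α(N) > 0 if and only if ρ(k) > 0 for every k with k_a ≤ k ≤ k_b. -/
theorem always_window_final_positive_iff
    (k_a k_b N : ℕ) (h1a : 1 ≤ k_a) (hab : k_a ≤ k_b) (hbN : k_b ≤ N)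
    (ρ : ℕ → ℝ) (α : ℕ → ℝ)
    (hinit : ∀ k, 1 ≤ k → k ≤ k_a → α k = ρ k_a)
    (hrec : ∀ k, k_a ≤ k → k < k_b → α (k + 1) = min (α k) (ρ (k + 1)))
    (hhold : ∀ k, k_b < k → k ≤ N → α k = α k_b) :
    α N > 0 ↔ ∀ k, k_a ≤ k → k ≤ k_b → ρ k > 0 := by
  have key : ∀ k, k_a ≤ k → k ≤ k_b →
      (α k > 0 ↔ ∀ j, k_a ≤ j → j ≤ k → ρ j > 0) := by
    intro k hk
    induction k, hk using Nat.le_induction with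
    | base =>
      intro _
      rw [hinit k_a h1a le_rfl]
      constructor
      · intro h j hj hj'
        have : j = k_a := le_antisymm hj' hj
        rwa [this]
      · intro h; exact h k_a le_rfl le_rfl
    | succ k hk ih =>
      intro hkb
      have hklt : k < k_b := lt_of_lt_of_le (Nat.lt_succ_self k) hkb
      rw [hrec k hk hklt, gt_iff_lt, lt_min_iff]
      rw [show (0 < α k) = (α k > 0) from rfl, ih (le_of_lt hklt)]
      constructor
      · rintro ⟨h1, h2⟩ j hj hj'
        rcases Nat.lt_or_ge j (k + 1) with h | h
        · exact h1 j hj (Nat.lt_succ_iff.mp h)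
        · have : j = k + 1 := le_antisymm hj' h
          rwa [this]
      · intro h
        exact ⟨fun j hj hj' => h j hj (hj'.trans (Nat.le_succ k)),
          h (k + 1) (hk.trans (Nat.le_succ k)) le_rfl⟩
  have hNb : α N = α k_b := by
    rcases Nat.lt_or_ge k_b N with h | h
    · exact hhold N h le_rfl
    · have : N = k_b := le_antisymm h hbN
      rw [this]
  rw [hNb]
  exact key k_b hab le_rfl
end

section
/- Let 1 ≤ k_a ≤ k_b ≤ N be natural numbers and let ρ : ℕ → ℝ. Suppose α : ℕ → ℝ satisfies: α(k) = ρ(k_a) for all 1 ≤ k ≤ k_a; α(k+1) = max(α(k), ρ(k+1)) for all k_a ≤ k < k_b; and α(k) = α(k_b) for all k_b < k ≤ N. Then α(N) > 0 if and only if there exists k with k_a ≤ k ≤ k_b and ρ(k) > 0. -/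
theorem eventually_window_final_positive_iff
    (k_a k_b N : ℕ) (h1a : 1 ≤ k_a) (hab : k_a ≤ k_b) (hbN : k_b ≤ N)
    (ρ : ℕ → ℝ) (α : ℕ → ℝ)
    (hinit : ∀ k, 1 ≤ k → k ≤ k_a → α k = ρ k_a)
    (hrec : ∀ k, k_a ≤ k → k < k_b → α (k + 1) = max (α k) (ρ (k + 1)))
    (hhold : ∀ k, k_b < k → k ≤ N → α k = α k_b) :
    α N > 0 ↔ ∃ k, k_a ≤ k ∧ k ≤ k_b ∧ ρ k > 0 := by
  have hN : α N = α k_b := by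
    rcases eq_or_lt_of_le hbN with h | h
    · rw [h]
    · exact hhold N h le_rfl
  have key : ∀ m, k_a ≤ m → m ≤ k_b → (α m > 0 ↔ ∃ k, k_a ≤ k ∧ k ≤ m ∧ ρ k > 0) := by
    intro m
    induction m with
    | zero => intro h _; omega
    | succ n ih =>
      intro hl hu
      rcases eq_or_lt_of_le hl with h | h
      · rw [hinit (n+1) (h1a.trans hl) h.symm.le]
        constructor
        · intro hp; exact ⟨k_a, le_rfl, h.le, hp⟩
        · rintro ⟨k, hk1, hk2, hk3⟩
          have : k = k_a := by omega
          rwa [this] at hk3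
      · have han : k_a ≤ n := by omega
        simp only [gt_iff_lt] at ih ⊢
        rw [hrec n han (by omega), lt_sup_iff, ih han (by omega)]
        constructor
        · rintro (⟨k, h1, h2, h3⟩ | hp)
          · exact ⟨k, h1, by omega, h3⟩
          · exact ⟨n+1, by omega, le_rfl, hp⟩
        · rintro ⟨k, h1, h2, h3⟩
          rcases eq_or_lt_of_le h2 with h4 | h4
          · right; rwa [h4] at h3
          · left; exact ⟨k, h1, by omega, h3⟩
  rw [hN]; exact key k_b hab le_rfl
end

section
/- For every κ > 0 and all real a, b: min(a,b) − κ/4 ≤ smin(a,b,κ) ≤ min(a,b). -/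
/-- The smoothed minimum with smoothing gain `κ`. -/
noncomputable def smin (a b κ : ℝ) : ℝ :=
  if a - b ≥ κ then b
  else if a - b ≤ -κ then a
  else
    a * (1 - (1 / 2 + (a - b) / (2 * κ))) + (1 / 2 + (a - b) / (2 * κ)) * b -
      κ * (1 / 2 + (a - b) / (2 * κ)) * (1 - (1 / 2 + (a - b) / (2 * κ)))

/-- The smoothed maximum with smoothing gain `κ`. -/
noncomputable def smax (a b κ : ℝ) : ℝ :=
  if b - a ≥ κ then b
  else if b - a ≤ -κ then a
  else
    b * (1 - (1 / 2 + (a - b) / (2 * κ))) + (1 / 2 + (a - b) / (2 * κ)) * a +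
      κ * (1 / 2 + (a - b) / (2 * κ)) * (1 - (1 / 2 + (a - b) / (2 * κ)))

theorem smin_approx (κ : ℝ) (hκ : 0 < κ) (a b : ℝ) :
    min a b - κ / 4 ≤ smin a b κ ∧ smin a b κ ≤ min a b := by
  unfold smin
  split_ifs with h1 h2
  · rw [min_eq_right (by linarith)]
    constructor <;> linarith
  · rw [min_eq_left (by linarith)]
    constructor <;> linarith
  · push_neg at h1 h2
    have hκ' : (2 * κ) ≠ 0 := by positivity
    have hh : (a - b) / (2 * κ) * (2 * κ) = a - b := div_mul_cancel₀ _ hκ'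
    rcases le_total a b with hab | hab
    · rw [min_eq_left hab]
      constructor <;> nlinarith [sq_nonneg (a - b + κ), sq_nonneg (a - b - κ), sq_nonneg (a - b)]
    · rw [min_eq_right hab]
      constructor <;> nlinarith [sq_nonneg (a - b + κ), sq_nonneg (a - b - κ), sq_nonneg (a - b)]
end

section
/- Fix κ > 0 and b ∈ ℝ. The function a ↦ smin(a,b,κ) is differentiable at every a ∈ ℝ, with derivative equal to max(0, min(1, 1/2 − (a−b)/(2κ))); in particular the derivative equals 0 when a−b ≥ κ, equals 1 when a−b ≤ −κ, and equals 1−h with h = 1/2 + (a−b)/(2κ) when −κ ≤ a−b ≤ κ. -/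
/-!
With the ramp `r u = max 0 u`, the three branches of `smin x b κ` (the line `x`, the parabola
`b - (κ - (x - b))² / (4κ)` tangent to both lines, and the constant `b`) are the single expression
`x - (r (x - (b - κ))² - r (x - (b + κ))²) / (4κ)`. Since `r²` is `C¹` with derivative `2r`, the
derivative is `1 - (r (a - b + κ) - r (a - b - κ)) / (2κ)`, which is the slope `1/2 - (a - b)/(2κ)`
of the parabola clamped to `[0, 1]`.
-/

open Filter Topology Set

theorem hasDerivAt_max_zero_sq (u : ℝ) :
    HasDerivAt (fun v : ℝ => max 0 v ^ 2) (2 * max 0 u) u := by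
  refine hasDerivAt_of_hasDerivAt_of_ne' (g := fun v => 2 * max 0 v) (x := 0)
    (fun v hv => ?_) (by fun_prop) (by fun_prop) u
  rcases hv.lt_or_gt with hneg | hpos
  · have hzero : (fun w : ℝ => max 0 w ^ 2) =ᶠ[𝓝 v] fun _ => 0 := by
      filter_upwards [eventually_lt_nhds hneg] with w hw
      simp [max_eq_left hw.le]
    simpa [max_eq_left hneg.le] using (hasDerivAt_const v (0 : ℝ)).congr_of_eventuallyEq hzero
  · have hsq : (fun w : ℝ => max 0 w ^ 2) =ᶠ[𝓝 v] fun w => w ^ 2 := by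
      filter_upwards [eventually_gt_nhds hpos] with w hw
      rw [max_eq_right hw.le]
    simpa [max_eq_right hpos.le] using (hasDerivAt_pow 2 v).congr_of_eventuallyEq hsq

theorem smin_eq_sub_max_zero_sq {κ : ℝ} (hκ : 0 < κ) (x b : ℝ) :
    smin x b κ = x - (max 0 (x - (b - κ)) ^ 2 - max 0 (x - (b + κ)) ^ 2) / (4 * κ) := by
  unfold smin
  split_ifs with hright hleft
  · rw [max_eq_right (by linarith), max_eq_right (by linarith)]
    field_simp
    ring
  · rw [max_eq_left (by linarith), max_eq_left (by linarith)]
    ring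
  · rw [max_eq_right (by linarith), max_eq_left (by linarith)]
    field_simp
    ring

noncomputable def sminDeriv (t κ : ℝ) : ℝ := max 0 (min 1 (1 / 2 - t / (2 * κ)))

theorem sminDeriv_of_le {κ t : ℝ} (hκ : 0 < κ) (h : κ ≤ t) : sminDeriv t κ = 0 := by
  have : 1 / 2 ≤ t / (2 * κ) := by rw [le_div_iff₀ (by positivity)]; linarith
  exact max_eq_left (min_le_of_right_le (by linarith))

theorem sminDeriv_of_le_neg {κ t : ℝ} (hκ : 0 < κ) (h : t ≤ -κ) : sminDeriv t κ = 1 := by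
  have : t / (2 * κ) ≤ -(1 / 2) := by rw [div_le_iff₀ (by positivity)]; linarith
  rw [sminDeriv, min_eq_left (by linarith), max_eq_right zero_le_one]

theorem sminDeriv_of_mem_Icc {κ t : ℝ} (hκ : 0 < κ) (h : t ∈ Icc (-κ) κ) :
    sminDeriv t κ = 1 - (1 / 2 + t / (2 * κ)) := by
  have hle : t / (2 * κ) ≤ 1 / 2 := by rw [div_le_iff₀ (by positivity)]; linarith [h.2]
  have hge : -(1 / 2) ≤ t / (2 * κ) := by rw [le_div_iff₀ (by positivity)]; linarith [h.1]
  rw [sminDeriv, min_eq_right (by linarith), max_eq_right (by linarith)]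
  ring

theorem sminDeriv_sub_eq {κ : ℝ} (hκ : 0 < κ) (a b : ℝ) :
    sminDeriv (a - b) κ = 1 - (max 0 (a - (b - κ)) - max 0 (a - (b + κ))) / (2 * κ) := by
  rcases le_total (a - b) (-κ) with hleft | hleft
  · rw [sminDeriv_of_le_neg hκ hleft, max_eq_left (by linarith), max_eq_left (by linarith)]
    ring
  rcases le_total (a - b) κ with hright | hright
  · rw [sminDeriv_of_mem_Icc hκ ⟨hleft, hright⟩, max_eq_right (by linarith),
      max_eq_left (by linarith)]
    field_simp
    ring
  · rw [sminDeriv_of_le hκ hright, max_eq_right (by linarith), max_eq_right (by linarith)]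
    field_simp
    ring

theorem hasDerivAt_smin_fst {κ : ℝ} (hκ : 0 < κ) (b a : ℝ) :
    HasDerivAt (fun x : ℝ => smin x b κ) (sminDeriv (a - b) κ) a := by
  have hramp (c : ℝ) : HasDerivAt (fun x => max 0 (x - c) ^ 2) (2 * max 0 (a - c)) a :=
    (hasDerivAt_max_zero_sq (a - c)).comp_sub_const a c
  rw [funext fun x => smin_eq_sub_max_zero_sq hκ x b, sminDeriv_sub_eq hκ]
  refine ((hasDerivAt_id' a).sub (((hramp _).sub (hramp _)).div_const (4 * κ))).congr_deriv ?_
  ring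

theorem smin_hasDerivAt_fst (κ : ℝ) (hκ : 0 < κ) (b : ℝ) (a : ℝ) :
    HasDerivAt (fun x : ℝ => smin x b κ)
      (max 0 (min 1 (1 / 2 - (a - b) / (2 * κ)))) a ∧
    (a - b ≥ κ → max 0 (min 1 (1 / 2 - (a - b) / (2 * κ))) = 0) ∧
    (a - b ≤ -κ → max 0 (min 1 (1 / 2 - (a - b) / (2 * κ))) = 1) ∧
    (-κ ≤ a - b → a - b ≤ κ →
      max 0 (min 1 (1 / 2 - (a - b) / (2 * κ))) = 1 - (1 / 2 + (a - b) / (2 * κ))) :=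
  ⟨hasDerivAt_smin_fst hκ b a, sminDeriv_of_le hκ, sminDeriv_of_le_neg hκ,
    fun h₁ h₂ => sminDeriv_of_mem_Icc hκ ⟨h₁, h₂⟩⟩
end

section
/- Let κ > 0, let k_a ≤ k_b be natural numbers, and let ρ : ℕ → ℝ. Define α, α_s : ℕ → ℝ by α(k_a) = α_s(k_a) = ρ(k_a), α(k+1) = min(α(k), ρ(k+1)), and α_s(k+1) = smin(α_s(k), ρ(k+1), κ) for k_a ≤ k < k_b. Then for every k with k_a ≤ k ≤ k_b: α(k) − (k − k_a)·κ/4 ≤ α_s(k) ≤ α(k). -/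
lemma smin_le_min (a b κ : ℝ) (hκ : 0 < κ) : smin a b κ ≤ min a b := by
  unfold smin
  split_ifs with h1 h2
  · exact le_min (by linarith) le_rfl
  · exact le_min le_rfl (by linarith)
  · push_neg at h1 h2
    set h := 1 / 2 + (a - b) / (2 * κ) with hh
    clear_value h
    have hab2 : a - b = κ * (2 * h - 1) := by
      rw [hh]; field_simp; ring
    have h0 : 0 < h := by nlinarith
    have h1' : h < 1 := by nlinarith
    refine le_min (by nlinarith [sq_nonneg h]) (by nlinarith [sq_nonneg (1 - h)])

lemma min_le_smin (a b κ : ℝ) (hκ : 0 < κ) : min a b - κ / 4 ≤ smin a b κ := by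
  unfold smin
  split_ifs with h1 h2
  · calc min a b - κ / 4 ≤ min a b := by linarith
      _ ≤ b := min_le_right a b
  · calc min a b - κ / 4 ≤ min a b := by linarith
      _ ≤ a := min_le_left a b
  · push_neg at h1 h2
    set h := 1 / 2 + (a - b) / (2 * κ) with hh
    clear_value h
    have hab2 : a - b = κ * (2 * h - 1) := by
      rw [hh]; field_simp; ring
    have h0 : 0 < h := by nlinarith
    have h1' : h < 1 := by nlinarith
    rcases le_total (a - b) 0 with hd | hd
    · have hm : min a b = a := min_eq_left (by linarith)
      rw [hm]
      have hh2 : h ≤ 1 / 2 := by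
        rw [hh]
        have : (a - b) / (2 * κ) ≤ 0 :=
          div_nonpos_of_nonpos_of_nonneg hd (by positivity)
        linarith
      nlinarith [mul_nonneg hκ.le (mul_nonneg (by linarith : (0:ℝ) ≤ 1 / 2 - h)
        (by linarith : (0:ℝ) ≤ 1 / 2 + h)), sq_nonneg h]
    · have hm : min a b = b := min_eq_right (by linarith)
      rw [hm]
      have hh2 : 1 / 2 ≤ h := by
        rw [hh]
        have : 0 ≤ (a - b) / (2 * κ) := div_nonneg hd (by positivity)
        linarith
      nlinarith [mul_nonneg hκ.le (mul_nonneg (by linarith : (0:ℝ) ≤ h - 1 / 2)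
        (by linarith : (0:ℝ) ≤ 3 / 2 - h)), sq_nonneg (1 - h)]

theorem smoothed_always_propagation_error
    (κ : ℝ) (hκ : 0 < κ) (k_a k_b : ℕ) (hab : k_a ≤ k_b) (ρ : ℕ → ℝ)
    (α αs : ℕ → ℝ)
    (hinit : α k_a = ρ k_a) (hinits : αs k_a = ρ k_a)
    (hrec : ∀ k, k_a ≤ k → k < k_b → α (k + 1) = min (α k) (ρ (k + 1)))
    (hrecs : ∀ k, k_a ≤ k → k < k_b → αs (k + 1) = smin (αs k) (ρ (k + 1)) κ) :
    ∀ k, k_a ≤ k → k ≤ k_b →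
      α k - (k - k_a : ℕ) * (κ / 4) ≤ αs k ∧ αs k ≤ α k := by
  intro k hk
  induction k, hk using Nat.le_induction with
  | base => intro _; simp [hinit, hinits]
  | succ k hk ih =>
    intro hkb
    have hklt : k < k_b := Nat.lt_of_succ_le hkb
    obtain ⟨ih1, ih2⟩ := ih (Nat.le_of_lt hklt)
    have h1 := hrec k hk hklt
    have h2 := hrecs k hk hklt
    constructor
    · have hlow : min (αs k) (ρ (k + 1)) - κ / 4 ≤ αs (k + 1) := by
        rw [h2]; exact min_le_smin _ _ _ hκ
      have : α (k + 1) - (k - k_a : ℕ) * (κ / 4) ≤ min (αs k) (ρ (k + 1)) := by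
        rw [h1]
        refine le_min ?_ ?_
        · calc min (α k) (ρ (k+1)) - (k - k_a : ℕ) * (κ / 4)
              ≤ α k - (k - k_a : ℕ) * (κ / 4) := by
                have := min_le_left (α k) (ρ (k+1)); linarith
            _ ≤ αs k := ih1
        · have hnn : (0:ℝ) ≤ (k - k_a : ℕ) * (κ / 4) := by positivity
          have := min_le_right (α k) (ρ (k+1)); linarith
      have hcast : ((k + 1 - k_a : ℕ) : ℝ) = ((k - k_a : ℕ) : ℝ) + 1 := by
        have : k + 1 - k_a = (k - k_a) + 1 := by omega
        rw [this]; push_cast; ring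
      rw [hcast]
      linarith
    · rw [h1, h2]
      calc smin (αs k) (ρ (k + 1)) κ ≤ min (αs k) (ρ (k + 1)) := smin_le_min _ _ _ hκ
        _ ≤ min (α k) (ρ (k + 1)) := min_le_min ih2 le_rfl
end
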